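/- arXiv:2009.06836 — 4 statements merged into one kernel-verified Lean document; each statement's English description precedes it below -/
import Mathlib

section
/- Ajax monoidal functors preserve adjoint commutative monoids: if (c, μ, η) is a commutative monoid object in C with μ and η right adjoints, and F : C ⟶ D is an ajax po-functor, then F(c) carries an adjoint commutative monoid structure with unit ρ ≫ F(η) and multiplication ρ_{c,c} ≫ F(μ). -/
open CategoryTheory

universe v₁ v₂ u₁ u₂

/-- A morphism `f : Y ⟶ X` in a po-category is a right adjoint if it has a left adjoint
`l : X ⟶ Y`, i.e. `𝟙 X ≤ l ≫ f` and `f ≫ l ≤ 𝟙 Y`. -/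
def IsRightAdjHom {E : Type u₂} [Category.{v₂} E] [∀ X Y : E, PartialOrder (X ⟶ Y)]
    {X Y : E} (f : Y ⟶ X) : Prop :=
  ∃ l : X ⟶ Y, 𝟙 X ≤ l ≫ f ∧ f ≫ l ≤ 𝟙 Y

namespace IsRightAdjHom

/-- Left adjoints compose in the opposite order: `lg ≫ lf ⊣ f ≫ g`. -/
theorem comp {E : Type u₂} [Category.{v₂} E] [∀ X Y : E, PartialOrder (X ⟶ Y)]
    (compMono : ∀ {X Y Z : E} (f f' : X ⟶ Y) (g g' : Y ⟶ Z),
      f ≤ f' → g ≤ g' → f ≫ g ≤ f' ≫ g')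
    {X Y Z : E} {f : Z ⟶ Y} {g : Y ⟶ X}
    (hf : IsRightAdjHom f) (hg : IsRightAdjHom g) : IsRightAdjHom (f ≫ g) := by
  obtain ⟨lf, hf_unit, hf_counit⟩ := hf
  obtain ⟨lg, hg_unit, hg_counit⟩ := hg
  refine ⟨lg ≫ lf, ?_, ?_⟩
  · calc 𝟙 X ≤ lg ≫ g := hg_unit
      _ = lg ≫ 𝟙 Y ≫ g := by rw [Category.id_comp]
      _ ≤ lg ≫ (lf ≫ f) ≫ g :=
          compMono _ _ _ _ le_rfl (compMono _ _ _ _ hf_unit le_rfl)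
      _ = (lg ≫ lf) ≫ f ≫ g := by simp only [Category.assoc]
  · calc (f ≫ g) ≫ lg ≫ lf = f ≫ (g ≫ lg) ≫ lf := by simp only [Category.assoc]
      _ ≤ f ≫ 𝟙 Y ≫ lf := compMono _ _ _ _ le_rfl (compMono _ _ _ _ hg_counit le_rfl)
      _ = f ≫ lf := by rw [Category.id_comp]
      _ ≤ 𝟙 Z := hf_counit

theorem map {C : Type u₁} {D : Type u₂} [Category.{v₁} C] [Category.{v₂} D]
    [∀ X Y : C, PartialOrder (X ⟶ Y)] [∀ X Y : D, PartialOrder (X ⟶ Y)] (F : C ⥤ D)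
    (Fmono : ∀ {X Y : C} {f g : X ⟶ Y}, f ≤ g → F.map f ≤ F.map g)
    {X Y : C} {f : Y ⟶ X} (hf : IsRightAdjHom f) : IsRightAdjHom (F.map f) := by
  obtain ⟨l, h_unit, h_counit⟩ := hf
  refine ⟨F.map l, ?_, ?_⟩
  · simpa only [F.map_id, F.map_comp] using Fmono h_unit
  · simpa only [F.map_id, F.map_comp] using Fmono h_counit

end IsRightAdjHom

/-- Ajax monoidal po-functors preserve adjoint commutative monoids: if `M` is a
commutative monoid object in `C` whose unit and multiplication are right adjoints, and
`F` is an ajax lax (braided) monoidal po-functor, then `F(M)` is a commutative monoid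
object in `D` whose unit `ρ ≫ F(η)` and multiplication `ρ_{c,c} ≫ F(μ)` are right
adjoints. -/
theorem statement9 {C : Type u₁} {D : Type u₂}
    [Category.{v₁} C] [Category.{v₂} D]
    [MonoidalCategory C] [MonoidalCategory D]
    [BraidedCategory C] [BraidedCategory D]
    [∀ X Y : C, PartialOrder (X ⟶ Y)] [∀ X Y : D, PartialOrder (X ⟶ Y)]
    (compMonoD : ∀ {X Y Z : D} (f f' : X ⟶ Y) (g g' : Y ⟶ Z),
      f ≤ f' → g ≤ g' → f ≫ g ≤ f' ≫ g')
    (F : C ⥤ D) [F.LaxBraided]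
    (Fmono : ∀ {X Y : C} {f g : X ⟶ Y}, f ≤ g → F.map f ≤ F.map g)
    (hε : IsRightAdjHom (Functor.LaxMonoidal.ε F))
    (hμ : ∀ X Y : C, IsRightAdjHom (Functor.LaxMonoidal.μ F X Y))
    (M : CommMon C)
    (hone : IsRightAdjHom (MonObj.one (X := M.X))) (hmul : IsRightAdjHom (MonObj.mul (X := M.X))) :
    MonObj.one (X := (F.mapCommMon.obj M).X) = Functor.LaxMonoidal.ε F ≫ F.map (MonObj.one (X := M.X)) ∧
    MonObj.mul (X := (F.mapCommMon.obj M).X) = Functor.LaxMonoidal.μ F M.X M.X ≫ F.map (MonObj.mul (X := M.X)) ∧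
    IsRightAdjHom (MonObj.one (X := (F.mapCommMon.obj M).X)) ∧
    IsRightAdjHom (MonObj.mul (X := (F.mapCommMon.obj M).X)) := by
  refine ⟨rfl, rfl, ?_, ?_⟩
  · exact hε.comp compMonoD (hone.map F Fmono)
  · exact (hμ M.X M.X).comp compMonoD (hmul.map F Fmono)
end

section
/- Fundamental lemma of regular categories: for a regular category R, a relation x ⊆ r × s is a left adjoint in the relations po-category Rel(R) if and only if x is the graph of a (unique) morphism f : r ⟶ s in R; consequently R is isomorphic, via an identity-on-objects functor, to the category of left adjoints in Rel(R). -/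
/-!
A relation `x ⊆ r ⨯ s` with legs `p = x.arrow ≫ fst`, `q = x.arrow ≫ snd` is a graph exactly
when `p` is an isomorphism. Suppose `x ⊣ y`. Since images are regular epis and these are stable
under pullback, the unit `id ≤ x ⨟ y` lifts every generalized element of `r`, after a regular-epi
cover, to a `y`-element `b` that is `x`-related back to it; taking the element `𝟙 r` makes `p` a
strong epi. If `z₁ ≫ p = z₂ ≫ p`, the counit `y ⨟ x ≤ id` applied to the same `b` gives
`z₁ ≫ q = z₂ ≫ q`, so `p` is mono because `x` is jointly monic. Conversely, the cograph of `f`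
is right adjoint to its graph.
-/
open CategoryTheory CategoryTheory.Limits

universe v u

variable {C : Type u} [Category.{v} C]

namespace RegularLogic

variable [HasFiniteLimits C] [HasImages C]

/-- The graph of `f : X ⟶ s`, as a relation `X ⇸ s` in `Rel(C)`:
the subobject `⟨𝟙 X, f⟩ ⊆ X ⨯ s`. -/
noncomputable def graphRel {X s : C} (f : X ⟶ s) : Subobject (X ⨯ s) :=
  Subobject.mk (prod.lift (𝟙 X) f)

/-- The cograph of `g : X ⟶ r`, as a relation `r ⇸ X` in `Rel(C)`:
the subobject `⟨g, 𝟙 X⟩ ⊆ r ⨯ X`. -/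
noncomputable def cographRel {X r : C} (g : X ⟶ r) : Subobject (r ⨯ X) :=
  Subobject.mk (prod.lift g (𝟙 X))

/-- The identity relation on `r`: the diagonal subobject of `r ⨯ r`. -/
noncomputable def idRel (r : C) : Subobject (r ⨯ r) :=
  graphRel (𝟙 r)

/-- Composition of relations in `Rel(C)`: pull back over the middle object and take the
image of the induced map into `r ⨯ t`. -/
noncomputable def relComp {r s t : C} (x : Subobject (r ⨯ s)) (y : Subobject (s ⨯ t)) :
    Subobject (r ⨯ t) :=
  Subobject.mk (image.ι (prod.lift
    (pullback.fst (x.arrow ≫ prod.snd) (y.arrow ≫ prod.fst) ≫ x.arrow ≫ prod.fst)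
    (pullback.snd (x.arrow ≫ prod.snd) (y.arrow ≫ prod.fst) ≫ y.arrow ≫ prod.snd)))

end RegularLogic

open RegularLogic

namespace RegularLogic

attribute [local simp] prod.lift_fst prod.lift_snd prod.lift_fst_assoc prod.lift_snd_assoc
  pullback.lift_fst pullback.lift_snd pullback.lift_fst_assoc pullback.lift_snd_assoc

section Relations

variable [HasFiniteLimits C]

theorem mk_le_idRel_iff {A s : C} (m : A ⟶ s ⨯ s) [Mono m] :
    Subobject.mk m ≤ idRel s ↔ m ≫ prod.fst = m ≫ prod.snd := by
  constructor
  · intro h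
    rw [← Subobject.ofMkLEMk_comp h]
    simp
  · intro h
    exact Subobject.mk_le_mk_of_comm (m ≫ prod.fst) (by ext <;> simp [h])

theorem graphRel_arrow_snd {X s : C} (f : X ⟶ s) :
    (graphRel f).arrow ≫ prod.snd = ((graphRel f).arrow ≫ prod.fst) ≫ f := by
  rw [graphRel, ← Subobject.underlyingIso_hom_comp_eq_mk]
  simp

theorem cographRel_arrow_fst {X r : C} (g : X ⟶ r) :
    (cographRel g).arrow ≫ prod.fst = ((cographRel g).arrow ≫ prod.snd) ≫ g := by
  rw [cographRel, ← Subobject.underlyingIso_hom_comp_eq_mk]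
  simp

instance isIso_graphRel_arrow_fst {X s : C} (f : X ⟶ s) :
    IsIso ((graphRel f).arrow ≫ prod.fst) := by
  rw [graphRel, ← Subobject.underlyingIso_hom_comp_eq_mk, Category.assoc, prod.lift_fst,
    Category.comp_id]
  infer_instance

instance isIso_cographRel_arrow_snd {X r : C} (g : X ⟶ r) :
    IsIso ((cographRel g).arrow ≫ prod.snd) := by
  rw [cographRel, ← Subobject.underlyingIso_hom_comp_eq_mk, Category.assoc, prod.lift_snd,
    Category.comp_id]
  infer_instance

theorem graphRel_injective {X s : C} : Function.Injective (graphRel : (X ⟶ s) → _) := by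
  intro f g hfg
  have hk := Subobject.ofMkLEMk_comp hfg.le
  have hfst := hk =≫ prod.fst
  have hsnd := hk =≫ prod.snd
  simp only [Category.assoc, prod.lift_fst, prod.lift_snd, Category.comp_id] at hfst hsnd
  rw [← hsnd, hfst, Category.id_comp]

theorem eq_graphRel_of_isIso {r s : C} (x : Subobject (r ⨯ s)) [IsIso (x.arrow ≫ prod.fst)] :
    x = graphRel (inv (x.arrow ≫ prod.fst) ≫ x.arrow ≫ prod.snd) := by
  conv_lhs => rw [← Subobject.mk_arrow x]
  exact Subobject.mk_eq_mk_of_comm _ _ (asIso (x.arrow ≫ prod.fst)) (by ext <;> simp)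

variable [HasImages C]

theorem mk_image_le_idRel_iff {A s : C} (w : A ⟶ s ⨯ s) :
    Subobject.mk (image.ι w) ≤ idRel s ↔ w ≫ prod.fst = w ≫ prod.snd := by
  rw [mk_le_idRel_iff, ← cancel_epi (factorThruImage w)]
  simp

theorem relComp_le_idRel_iff {r s : C} (x : Subobject (r ⨯ s)) (y : Subobject (s ⨯ r)) :
    relComp x y ≤ idRel r ↔ ∀ ⦃T : C⦄ (a : T ⟶ x) (b : T ⟶ y),
      a ≫ x.arrow ≫ prod.snd = b ≫ y.arrow ≫ prod.fst →
      a ≫ x.arrow ≫ prod.fst = b ≫ y.arrow ≫ prod.snd := by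
  rw [relComp, mk_image_le_idRel_iff, prod.lift_fst, prod.lift_snd]
  constructor
  · intro h T a b hab
    simpa using pullback.lift a b hab ≫= h
  · intro h
    simpa using h _ _ pullback.condition

theorem idRel_le_relComp_of_lift {r s : C} (x : Subobject (r ⨯ s)) (y : Subobject (s ⨯ r))
    (a : r ⟶ x) (b : r ⟶ y) (hab : a ≫ x.arrow ≫ prod.snd = b ≫ y.arrow ≫ prod.fst)
    (ha : a ≫ x.arrow ≫ prod.fst = 𝟙 r) (hb : b ≫ y.arrow ≫ prod.snd = 𝟙 r) :
    idRel r ≤ relComp x y :=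
  Subobject.mk_le_mk_of_comm (pullback.lift a b hab ≫ factorThruImage _)
    (by ext <;> simp [ha, hb])

theorem idRel_le_relComp_graphRel_cographRel {r s : C} (f : r ⟶ s) :
    idRel r ≤ relComp (graphRel f) (cographRel f) :=
  idRel_le_relComp_of_lift _ _ (inv ((graphRel f).arrow ≫ prod.fst))
    (inv ((cographRel f).arrow ≫ prod.snd))
    (by rw [graphRel_arrow_snd, cographRel_arrow_fst, IsIso.inv_hom_id_assoc,
      IsIso.inv_hom_id_assoc]) (by simp) (by simp)

theorem relComp_cographRel_graphRel_le_idRel {r s : C} (f : r ⟶ s) :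
    relComp (cographRel f) (graphRel f) ≤ idRel s := by
  refine (relComp_le_idRel_iff _ _).2 fun _ a b hab => ?_
  rw [cographRel_arrow_fst, graphRel_arrow_snd]
  simp only [← Category.assoc] at hab ⊢
  rw [hab]

end Relations

theorem regular_of_kernelPair_coequalizers [HasFiniteLimits C]
    [∀ {X Y : C} (f : X ⟶ Y), HasCoequalizer (pullback.fst f f) (pullback.snd f f)]
    (hstab : ∀ {X Y Z : C} (f : X ⟶ Y) (g : Z ⟶ Y),
      Nonempty (RegularEpi f) → Nonempty (RegularEpi (pullback.snd f g))) :
    Regular C where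
  hasCoequalizer_of_isKernelPair {_ _ _ f _ _} h := by
    simpa using hasCoequalizer_epi_comp (f := pullback.fst f f) (g := pullback.snd f f)
      h.isoPullback.hom
  regularEpiIsStableUnderBaseChange :=
    .of_forall_exists_isPullback fun f g _ hg =>
      ⟨_, pullback.snd g f, pullback.fst g f, (IsPullback.of_hasPullback g f).flip,
        ⟨hstab g f hg.regularEpi⟩⟩

section Regular

variable [Regular C]

theorem exists_regularEpi_lift_of_image {X B T : C} (h : X ⟶ B) (d : T ⟶ image h) :
    ∃ (T' : C) (e : T' ⟶ T) (l : T' ⟶ X), IsRegularEpi e ∧ l ≫ h = e ≫ d ≫ image.ι h :=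
  ⟨_, pullback.snd (factorThruImage h) d, pullback.fst _ _, inferInstance, by
    rw [← pullback.condition_assoc, image.fac]⟩

theorem exists_cover_of_idRel_le_relComp {r s : C} (x : Subobject (r ⨯ s))
    (y : Subobject (s ⨯ r)) (h : idRel r ≤ relComp x y) {T : C} (z : T ⟶ r) :
    ∃ (T' : C) (e : T' ⟶ T) (a : T' ⟶ x) (b : T' ⟶ y), IsRegularEpi e ∧
      a ≫ x.arrow ≫ prod.snd = b ≫ y.arrow ≫ prod.fst ∧
      a ≫ x.arrow ≫ prod.fst = e ≫ z ∧ b ≫ y.arrow ≫ prod.snd = e ≫ z := by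
  rw [idRel, graphRel, relComp] at h
  have hd := Subobject.ofMkLEMk_comp h
  obtain ⟨T', e, l, he, hl⟩ := exists_regularEpi_lift_of_image _ (z ≫ Subobject.ofMkLEMk _ _ h)
  refine ⟨T', e, l ≫ pullback.fst _ _, l ≫ pullback.snd _ _, he, by simp [pullback.condition],
    ?_, ?_⟩
  · simpa [hd] using hl =≫ prod.fst
  · simpa [hd] using hl =≫ prod.snd

theorem strongEpi_arrow_fst_of_idRel_le_relComp {r s : C} (x : Subobject (r ⨯ s))
    (y : Subobject (s ⨯ r)) (h : idRel r ≤ relComp x y) : StrongEpi (x.arrow ≫ prod.fst) := by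
  obtain ⟨_, e, a, -, he, -, hae, -⟩ := exists_cover_of_idRel_le_relComp x y h (𝟙 r)
  rw [Category.comp_id] at hae
  have : StrongEpi (a ≫ x.arrow ≫ prod.fst) := hae ▸ inferInstance
  exact strongEpi_of_strongEpi a _

theorem mono_arrow_fst_of_relAdjunction {r s : C} (x : Subobject (r ⨯ s))
    (y : Subobject (s ⨯ r)) (hunit : idRel r ≤ relComp x y) (hcounit : relComp y x ≤ idRel s) :
    Mono (x.arrow ≫ prod.fst) := by
  refine ⟨fun z₁ z₂ hz => ?_⟩
  have hsnd : z₁ ≫ x.arrow ≫ prod.snd = z₂ ≫ x.arrow ≫ prod.snd := by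
    obtain ⟨_, e, -, b, he, -, -, hb⟩ :=
      exists_cover_of_idRel_le_relComp x y hunit (z₁ ≫ x.arrow ≫ prod.fst)
    have hsv := (relComp_le_idRel_iff y x).1 hcounit
    have h₁ := hsv b (e ≫ z₁) (by simp [hb])
    have h₂ := hsv b (e ≫ z₂) (by simp [hb, hz])
    simpa [cancel_epi] using h₁.symm.trans h₂
  rw [← cancel_mono x.arrow]
  ext <;> simpa

theorem isIso_arrow_fst_of_relAdjunction {r s : C} (x : Subobject (r ⨯ s))
    (y : Subobject (s ⨯ r)) (hunit : idRel r ≤ relComp x y) (hcounit : relComp y x ≤ idRel s) :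
    IsIso (x.arrow ≫ prod.fst) :=
  have := strongEpi_arrow_fst_of_idRel_le_relComp x y hunit
  have := mono_arrow_fst_of_relAdjunction x y hunit hcounit
  isIso_of_mono_of_strongEpi _

end Regular

end RegularLogic

/-- Fundamental lemma of regular categories: a relation `x ⊆ r ⨯ s` is a left adjoint in
the relations po-category `Rel(C)` if and only if it is the graph of a unique morphism
`f : r ⟶ s`.  (Hence the regular category is recovered, identity-on-objects, as the
category of left adjoints in `Rel(C)`.) -/
theorem statement11 {C : Type u} [Category.{v} C] [HasFiniteLimits C] [HasImages C]
    [hker : ∀ {X Y : C} (f : X ⟶ Y), HasCoequalizer (pullback.fst f f) (pullback.snd f f)]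
    (hstab : ∀ {X Y Z : C} (f : X ⟶ Y) (g : Z ⟶ Y),
      Nonempty (RegularEpi f) → Nonempty (RegularEpi (pullback.snd f g)))
    {r s : C} (x : Subobject (r ⨯ s)) :
    (∃ y : Subobject (s ⨯ r), idRel r ≤ relComp x y ∧ relComp y x ≤ idRel s) ↔
    ∃! f : r ⟶ s, x = graphRel f := by
  constructor
  · rintro ⟨y, hunit, hcounit⟩
    have : Regular C := regular_of_kernelPair_coequalizers hstab
    have := isIso_arrow_fst_of_relAdjunction x y hunit hcounit
    exact ⟨_, eq_graphRel_of_isIso x,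
      fun g hg => graphRel_injective (hg.symm.trans (eq_graphRel_of_isIso x))⟩
  · rintro ⟨f, rfl, -⟩
    exact ⟨cographRel f, idRel_le_relComp_graphRel_cographRel f,
      relComp_cographRel_graphRel_le_idRel f⟩
end

section
/- If R ⟶ T ⟵ S are regular functors between regular categories, then the comma category (R ↓ S) is regular, and the projection functor (R ↓ S) ⟶ R × S preserves and reflects finite limits and regular epimorphisms. -/
open CategoryTheory CategoryTheory.Limits

universe v₁ v₂ v₃ u₁ u₂ u₃

/-!
Limits in `Comma F G` are computed componentwise as soon as `G` preserves them, and colimits as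
soon as `F` preserves them. A regular functor preserves the coequalizer of every kernel pair,
since that coequalizer is a regular epimorphism whose kernel pair it preserves. Hence both the
kernel pair of a morphism of `Comma F G` and the coequalizer of that kernel pair are computed
componentwise, so a morphism is a regular epimorphism exactly when both of its components are,
and pullback-stability is inherited from `R` and `S`. The projection to `R × S` preserves finite
limits and reflects isomorphisms, hence reflects finite limits.
-/

namespace CategoryTheory

section RegularEpi

variable {C D : Type*} [Category C] [Category D] {K X Y : C} {f : X ⟶ Y} {a b : K ⟶ X}

theorem hasCoequalizer_of_isKernelPair [HasPullbacks C]
    [∀ {X Y : C} (f : X ⟶ Y), HasCoequalizer (pullback.fst f f) (pullback.snd f f)]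
    (h : IsKernelPair f a b) : HasCoequalizer a b :=
  hasColimit_of_iso (F := parallelPair (pullback.fst f f) (pullback.snd f f))
    (parallelPair.ext h.isoPullback (Iso.refl X) (by simp) (by simp))

theorem IsKernelPair.coequalizer_π (h : IsKernelPair f a b) [HasCoequalizer a b] :
    IsKernelPair (coequalizer.π a b) a b :=
  IsKernelPair.cancel_right (f₂ := coequalizer.desc f h.w) (coequalizer.condition a b)
    (by rwa [coequalizer.π_desc])

theorem IsKernelPair.preservesColimit_parallelPair (h : IsKernelPair f a b) [EffectiveEpi f]
    (F : C ⥤ D) [PreservesLimit (cospan f f) F] [F.PreservesEffectiveEpis] :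
    PreservesColimit (parallelPair a b) F :=
  preservesColimit_of_preserves_colimit_cocone
    (isColimitCoforkOfEffectiveEpi f h.cone h.isLimit)
    ((isColimitMapCoconeCoforkEquiv F h.w).symm
      (isColimitCoforkOfEffectiveEpi (F.map f) (h.map F).cone (h.map F).isLimit))

theorem IsKernelPair.preservesColimit_parallelPair_of_hasCoequalizer (h : IsKernelPair f a b)
    [HasCoequalizer a b] (F : C ⥤ D) [PreservesLimitsOfShape WalkingCospan F]
    [F.PreservesEffectiveEpis] : PreservesColimit (parallelPair a b) F :=
  IsKernelPair.preservesColimit_parallelPair (IsKernelPair.coequalizer_π h) F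

theorem isRegularEpi_of_isPullback [HasPullbacks C]
    (hstab : ∀ {X Y Z : C} (f : X ⟶ Y) (g : Z ⟶ Y),
      IsRegularEpi f → IsRegularEpi (pullback.snd f g))
    {P Z : C} {fst : P ⟶ X} {snd : P ⟶ Z} {g : Z ⟶ Y} (h : IsPullback fst snd f g)
    (hf : IsRegularEpi f) : IsRegularEpi snd := by
  rw [← h.isoPullback_hom_snd]
  exact (MorphismProperty.regularEpi C).cancel_left_of_respectsIso _ _ |>.2 (hstab f g hf)

theorem isRegularEpi_iff_nonempty (f : X ⟶ Y) : IsRegularEpi f ↔ Nonempty (RegularEpi f) :=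
  ⟨fun h => h.regularEpi, IsRegularEpi.mk⟩

theorem Functor.isRegularEpi_map (F : C ⥤ D) [PreservesColimitsOfShape WalkingParallelPair F]
    [IsRegularEpi f] : IsRegularEpi (F.map f) :=
  isRegularEpi_of_regularEpi
    (Cofork.IsColimit.regularEpi
      (isColimitMapCoconeCoforkEquiv F _ (isColimitOfPreserves F (IsRegularEpi.isColimit f))))

theorem IsKernelPair.isRegularEpi_map (h : IsKernelPair f a b) [IsRegularEpi f]
    (F : C ⥤ D) [PreservesColimit (parallelPair a b) F] : IsRegularEpi (F.map f) :=
  isRegularEpi_of_regularEpi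
    (Cofork.IsColimit.regularEpi
      (isColimitMapCoconeCoforkEquiv F h.w (isColimitOfPreserves F h.toCoequalizer')))

end RegularEpi

namespace Prod

variable {C D : Type*} [Category C] [Category D] {J : Type*} [Category J] {K : J ⥤ C × D}

def isLimitOfIsLimitFstSnd {c : Cone K} (h₁ : IsLimit ((Prod.fst C D).mapCone c))
    (h₂ : IsLimit ((Prod.snd C D).mapCone c)) : IsLimit c where
  lift s := (h₁.lift ((Prod.fst C D).mapCone s), h₂.lift ((Prod.snd C D).mapCone s))
  fac s j := Prod.ext (h₁.fac ((Prod.fst C D).mapCone s) j)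
    (h₂.fac ((Prod.snd C D).mapCone s) j)
  uniq s m hm := Prod.ext
    (h₁.uniq ((Prod.fst C D).mapCone s) m.1 fun j => congrArg _root_.Prod.fst (hm j))
    (h₂.uniq ((Prod.snd C D).mapCone s) m.2 fun j => congrArg _root_.Prod.snd (hm j))

def isColimitOfIsColimitFstSnd {c : Cocone K} (h₁ : IsColimit ((Prod.fst C D).mapCocone c))
    (h₂ : IsColimit ((Prod.snd C D).mapCocone c)) : IsColimit c where
  desc s := (h₁.desc ((Prod.fst C D).mapCocone s), h₂.desc ((Prod.snd C D).mapCocone s))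
  fac s j := Prod.ext (h₁.fac ((Prod.fst C D).mapCocone s) j)
    (h₂.fac ((Prod.snd C D).mapCocone s) j)
  uniq s m hm := Prod.ext
    (h₁.uniq ((Prod.fst C D).mapCocone s) m.1 fun j => congrArg _root_.Prod.fst (hm j))
    (h₂.uniq ((Prod.snd C D).mapCocone s) m.2 fun j => congrArg _root_.Prod.snd (hm j))

def isColimitMapCoconeFst {c : Cocone K} (hc : IsColimit c) :
    IsColimit ((Prod.fst C D).mapCocone c) :=
  let extend (s : Cocone (K ⋙ Prod.fst C D)) : Cocone K :=
    { pt := (s.pt, c.pt.2)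
      ι := { app j := (s.ι.app j, (c.ι.app j).2)
             naturality _ _ u := Prod.ext (by simpa using s.w u)
               (by simpa using ((Prod.snd C D).mapCocone c).w u) } }
  { desc s := (hc.desc (extend s)).1
    fac s j := congrArg _root_.Prod.fst (hc.fac (extend s) j)
    uniq s m hm := congrArg _root_.Prod.fst
      (hc.uniq (extend s) (m, 𝟙 _) fun j => Prod.ext (hm j) (Category.comp_id _)) }

def isColimitMapCoconeSnd {c : Cocone K} (hc : IsColimit c) :
    IsColimit ((Prod.snd C D).mapCocone c) :=
  let extend (s : Cocone (K ⋙ Prod.snd C D)) : Cocone K :=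
    { pt := (c.pt.1, s.pt)
      ι := { app j := ((c.ι.app j).1, s.ι.app j)
             naturality _ _ u := Prod.ext (by simpa using ((Prod.fst C D).mapCocone c).w u)
               (by simpa using s.w u) } }
  { desc s := (hc.desc (extend s)).2
    fac s j := congrArg _root_.Prod.snd (hc.fac (extend s) j)
    uniq s m hm := congrArg _root_.Prod.snd
      (hc.uniq (extend s) (𝟙 _, m) fun j => Prod.ext (Category.comp_id _) (hm j)) }

instance preservesColimitsOfShape_fst : PreservesColimitsOfShape J (Prod.fst C D) where
  preservesColimit := ⟨fun hc => ⟨isColimitMapCoconeFst hc⟩⟩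

instance preservesColimitsOfShape_snd : PreservesColimitsOfShape J (Prod.snd C D) where
  preservesColimit := ⟨fun hc => ⟨isColimitMapCoconeSnd hc⟩⟩

theorem isRegularEpi_iff {P Q : C × D} (f : P ⟶ Q) :
    IsRegularEpi f ↔ IsRegularEpi f.1 ∧ IsRegularEpi f.2 := by
  constructor
  · intro _
    exact ⟨(Prod.fst C D).isRegularEpi_map (f := f), (Prod.snd C D).isRegularEpi_map (f := f)⟩
  · rintro ⟨_, _⟩
    exact isRegularEpi_of_regularEpi
      { W := (IsRegularEpi.W f.1, IsRegularEpi.W f.2)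
        left := (IsRegularEpi.left f.1, IsRegularEpi.left f.2)
        right := (IsRegularEpi.right f.1, IsRegularEpi.right f.2)
        w := Prod.ext (IsRegularEpi.w f.1) (IsRegularEpi.w f.2)
        isColimit := isColimitOfIsColimitFstSnd
          ((isColimitMapCoconeCoforkEquiv _ _).symm (IsRegularEpi.isColimit f.1))
          ((isColimitMapCoconeCoforkEquiv _ _).symm (IsRegularEpi.isColimit f.2)) }

end Prod

namespace Comma

variable {A B T : Type*} [Category A] [Category B] [Category T] {L : A ⥤ T} {R : B ⥤ T}

section Preserves

variable {J : Type*} [Category J] (K : J ⥤ Comma L R)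

instance preservesLimit_fst [HasLimit (K ⋙ fst L R)] [HasLimit (K ⋙ snd L R)]
    [PreservesLimit (K ⋙ snd L R) R] : PreservesLimit K (fst L R) :=
  preservesLimit_of_preserves_limit_cone
    (coneOfPreservesIsLimit K (limit.isLimit _) (limit.isLimit _)) (limit.isLimit _)

instance preservesLimit_snd [HasLimit (K ⋙ fst L R)] [HasLimit (K ⋙ snd L R)]
    [PreservesLimit (K ⋙ snd L R) R] : PreservesLimit K (snd L R) :=
  preservesLimit_of_preserves_limit_cone
    (coneOfPreservesIsLimit K (limit.isLimit _) (limit.isLimit _)) (limit.isLimit _)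

instance preservesColimit_fst [HasColimit (K ⋙ fst L R)] [HasColimit (K ⋙ snd L R)]
    [PreservesColimit (K ⋙ fst L R) L] : PreservesColimit K (fst L R) :=
  preservesColimit_of_preserves_colimit_cocone
    (coconeOfPreservesIsColimit K (colimit.isColimit _) (colimit.isColimit _))
    (colimit.isColimit _)

instance preservesColimit_snd [HasColimit (K ⋙ fst L R)] [HasColimit (K ⋙ snd L R)]
    [PreservesColimit (K ⋙ fst L R) L] : PreservesColimit K (snd L R) :=
  preservesColimit_of_preserves_colimit_cocone
    (coconeOfPreservesIsColimit K (colimit.isColimit _) (colimit.isColimit _))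
    (colimit.isColimit _)

instance preservesLimit_fst_prod'_snd [HasLimit (K ⋙ fst L R)] [HasLimit (K ⋙ snd L R)]
    [PreservesLimit (K ⋙ snd L R) R] : PreservesLimit K ((fst L R).prod' (snd L R)) :=
  ⟨fun hc => ⟨Prod.isLimitOfIsLimitFstSnd (isLimitOfPreserves (fst L R) hc)
    (isLimitOfPreserves (snd L R) hc)⟩⟩

end Preserves

theorem isIso_of_isIso_left_of_isIso_right {X Y : Comma L R} (f : X ⟶ Y) [IsIso f.left]
    [IsIso f.right] : IsIso f :=
  (isoMk (asIso f.left) (asIso f.right) f.w).isIso_hom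

instance reflectsIsomorphisms_fst_prod'_snd :
    ((fst L R).prod' (snd L R)).ReflectsIsomorphisms :=
  ⟨fun f _ =>
    have : IsIso f.left := (Prod.fst A B).map_isIso (((fst L R).prod' (snd L R)).map f)
    have : IsIso f.right := (Prod.snd A B).map_isIso (((fst L R).prod' (snd L R)).map f)
    isIso_of_isIso_left_of_isIso_right f⟩

section KernelPair

variable [HasPullbacks A] [HasPullbacks B] [PreservesLimitsOfShape WalkingCospan R]
  {X Y : Comma L R}

theorem isKernelPair_left (f : X ⟶ Y) :
    IsKernelPair f.left (pullback.fst f f).left (pullback.snd f f).left :=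
  (IsPullback.of_hasPullback f f).map (fst L R)

theorem isKernelPair_right (f : X ⟶ Y) :
    IsKernelPair f.right (pullback.fst f f).right (pullback.snd f f).right :=
  (IsPullback.of_hasPullback f f).map (snd L R)

variable [∀ {X Y : A} (f : X ⟶ Y), HasCoequalizer (pullback.fst f f) (pullback.snd f f)]
  [∀ {X Y : B} (f : X ⟶ Y), HasCoequalizer (pullback.fst f f) (pullback.snd f f)]
  [PreservesLimitsOfShape WalkingCospan L] [L.PreservesEffectiveEpis]

instance hasColimit_kernelPair_comp_fst {f : X ⟶ Y} :
    HasColimit (parallelPair (pullback.fst f f) (pullback.snd f f) ⋙ fst L R) :=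
  have := hasCoequalizer_of_isKernelPair (isKernelPair_left f)
  hasColimit_of_iso (F := parallelPair (pullback.fst f f).left (pullback.snd f f).left)
    (diagramIsoParallelPair _)

instance hasColimit_kernelPair_comp_snd {f : X ⟶ Y} :
    HasColimit (parallelPair (pullback.fst f f) (pullback.snd f f) ⋙ snd L R) :=
  have := hasCoequalizer_of_isKernelPair (isKernelPair_right f)
  hasColimit_of_iso (F := parallelPair (pullback.fst f f).right (pullback.snd f f).right)
    (diagramIsoParallelPair _)

instance preservesColimit_kernelPair_comp_fst {f : X ⟶ Y} :
    PreservesColimit (parallelPair (pullback.fst f f) (pullback.snd f f) ⋙ fst L R) L :=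
  have := hasCoequalizer_of_isKernelPair (isKernelPair_left f)
  have := IsKernelPair.preservesColimit_parallelPair_of_hasCoequalizer (isKernelPair_left f) L
  preservesColimit_of_iso_diagram L
    (K₁ := parallelPair (pullback.fst f f).left (pullback.snd f f).left)
    (diagramIsoParallelPair (parallelPair (pullback.fst f f) (pullback.snd f f) ⋙ fst L R)).symm

theorem isRegularEpi_iff (f : X ⟶ Y) :
    IsRegularEpi f ↔ IsRegularEpi f.left ∧ IsRegularEpi f.right := by
  have hf := IsPullback.of_hasPullback f f
  constructor
  · intro _
    exact ⟨IsKernelPair.isRegularEpi_map hf (fst L R),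
      IsKernelPair.isRegularEpi_map hf (snd L R)⟩
  · rintro ⟨_, _⟩
    exact isRegularEpi_of_regularEpi (regularEpiOfKernelPair f (fstSndJointlyReflectColimit
      ((isColimitMapCoconeCoforkEquiv (fst L R) _).symm (isKernelPair_left f).toCoequalizer')
      ((isColimitMapCoconeCoforkEquiv (snd L R) _).symm (isKernelPair_right f).toCoequalizer')))

theorem isRegularEpi_pullback_snd
    (hA : ∀ {X Y Z : A} (f : X ⟶ Y) (g : Z ⟶ Y),
      IsRegularEpi f → IsRegularEpi (pullback.snd f g))
    (hB : ∀ {X Y Z : B} (f : X ⟶ Y) (g : Z ⟶ Y),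
      IsRegularEpi f → IsRegularEpi (pullback.snd f g))
    {Z : Comma L R} (f : X ⟶ Y) (g : Z ⟶ Y) [IsRegularEpi f] :
    IsRegularEpi (pullback.snd f g) := by
  obtain ⟨hl, hr⟩ := (isRegularEpi_iff f).1 ‹_›
  exact (isRegularEpi_iff _).2
    ⟨isRegularEpi_of_isPullback hA ((IsPullback.of_hasPullback f g).map (fst L R)) hl,
      isRegularEpi_of_isPullback hB ((IsPullback.of_hasPullback f g).map (snd L R)) hr⟩

end KernelPair

end Comma

end CategoryTheory

theorem statement16_general {R : Type u₁} {S : Type u₂} {T : Type u₃}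
    [Category.{v₁} R] [Category.{v₂} S] [Category.{v₃} T]
    [HasFiniteLimits R] [HasFiniteLimits S]
    [hkerR : ∀ {X Y : R} (f : X ⟶ Y), HasCoequalizer (pullback.fst f f) (pullback.snd f f)]
    [hkerS : ∀ {X Y : S} (f : X ⟶ Y), HasCoequalizer (pullback.fst f f) (pullback.snd f f)]
    (hstabR : ∀ {X Y Z : R} (f : X ⟶ Y) (g : Z ⟶ Y),
      Nonempty (RegularEpi f) → Nonempty (RegularEpi (pullback.snd f g)))
    (hstabS : ∀ {X Y Z : S} (f : X ⟶ Y) (g : Z ⟶ Y),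
      Nonempty (RegularEpi f) → Nonempty (RegularEpi (pullback.snd f g)))
    (F : R ⥤ T) (G : S ⥤ T)
    [PreservesFiniteLimits F] [PreservesFiniteLimits G]
    (hFepi : ∀ {X Y : R} (f : X ⟶ Y),
      Nonempty (RegularEpi f) → Nonempty (RegularEpi (F.map f))) :
    HasFiniteLimits (Comma F G) ∧
    (∀ {X Y : Comma F G} (f : X ⟶ Y),
      HasCoequalizer (pullback.fst f f) (pullback.snd f f)) ∧
    (∀ {X Y Z : Comma F G} (f : X ⟶ Y) (g : Z ⟶ Y),
      Nonempty (RegularEpi f) → Nonempty (RegularEpi (pullback.snd f g))) ∧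
    Nonempty (PreservesFiniteLimits ((Comma.fst F G).prod' (Comma.snd F G))) ∧
    Nonempty (ReflectsFiniteLimits ((Comma.fst F G).prod' (Comma.snd F G))) ∧
    (∀ {X Y : Comma F G} (f : X ⟶ Y),
      Nonempty (RegularEpi f) ↔
        Nonempty (RegularEpi (((Comma.fst F G).prod' (Comma.snd F G)).map f))) := by
  have : F.PreservesEffectiveEpis :=
    ⟨fun f _ => (hFepi f IsRegularEpi.regularEpi).some.effectiveEpi⟩
  have : PreservesFiniteLimits ((Comma.fst F G).prod' (Comma.snd F G)) :=
    ⟨fun _ _ _ => ⟨inferInstance⟩⟩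
  refine ⟨inferInstance, fun f => inferInstance, fun f g hf => ?_, ⟨this⟩,
    ⟨⟨fun _ _ _ => reflectsLimitsOfShape_of_reflectsIsomorphisms⟩⟩, fun f => ?_⟩
  · simp only [← isRegularEpi_iff_nonempty] at hstabR hstabS hf ⊢
    exact Comma.isRegularEpi_pullback_snd hstabR hstabS f g
  · simp only [← isRegularEpi_iff_nonempty]
    exact (Comma.isRegularEpi_iff f).trans
      (Prod.isRegularEpi_iff (((Comma.fst F G).prod' (Comma.snd F G)).map f)).symm

/-- If `F : R ⥤ T` and `G : S ⥤ T` are regular functors between regular categories, then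
the comma category `(F ↓ G)` is regular (it has finite limits, coequalizers of kernel
pairs, and pullback-stable regular epimorphisms), and the projection
`(F ↓ G) ⥤ R × S` preserves and reflects finite limits and regular epimorphisms. -/
theorem statement16 {R : Type u₁} {S : Type u₂} {T : Type u₃}
    [Category.{v₁} R] [Category.{v₂} S] [Category.{v₃} T]
    [HasFiniteLimits R] [HasFiniteLimits S] [HasFiniteLimits T]
    [hkerR : ∀ {X Y : R} (f : X ⟶ Y), HasCoequalizer (pullback.fst f f) (pullback.snd f f)]
    [hkerS : ∀ {X Y : S} (f : X ⟶ Y), HasCoequalizer (pullback.fst f f) (pullback.snd f f)]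
    [hkerT : ∀ {X Y : T} (f : X ⟶ Y), HasCoequalizer (pullback.fst f f) (pullback.snd f f)]
    (hstabR : ∀ {X Y Z : R} (f : X ⟶ Y) (g : Z ⟶ Y),
      Nonempty (RegularEpi f) → Nonempty (RegularEpi (pullback.snd f g)))
    (hstabS : ∀ {X Y Z : S} (f : X ⟶ Y) (g : Z ⟶ Y),
      Nonempty (RegularEpi f) → Nonempty (RegularEpi (pullback.snd f g)))
    (hstabT : ∀ {X Y Z : T} (f : X ⟶ Y) (g : Z ⟶ Y),
      Nonempty (RegularEpi f) → Nonempty (RegularEpi (pullback.snd f g)))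
    (F : R ⥤ T) (G : S ⥤ T)
    [PreservesFiniteLimits F] [PreservesFiniteLimits G]
    (hFepi : ∀ {X Y : R} (f : X ⟶ Y),
      Nonempty (RegularEpi f) → Nonempty (RegularEpi (F.map f)))
    (hGepi : ∀ {X Y : S} (f : X ⟶ Y),
      Nonempty (RegularEpi f) → Nonempty (RegularEpi (G.map f))) :
    HasFiniteLimits (Comma F G) ∧
    (∀ {X Y : Comma F G} (f : X ⟶ Y),
      HasCoequalizer (pullback.fst f f) (pullback.snd f f)) ∧
    (∀ {X Y Z : Comma F G} (f : X ⟶ Y) (g : Z ⟶ Y),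
      Nonempty (RegularEpi f) → Nonempty (RegularEpi (pullback.snd f g))) ∧
    Nonempty (PreservesFiniteLimits ((Comma.fst F G).prod' (Comma.snd F G))) ∧
    Nonempty (ReflectsFiniteLimits ((Comma.fst F G).prod' (Comma.snd F G))) ∧
    (∀ {X Y : Comma F G} (f : X ⟶ Y),
      Nonempty (RegularEpi f) ↔
        Nonempty (RegularEpi (((Comma.fst F G).prod' (Comma.snd F G)).map f))) :=
  statement16_general (hkerR := hkerR) (hkerS := hkerS) hstabR hstabS F G hFepi
end

section
/- In the free regular category on a set T, realized as the comma category of the inclusion of the opposite of the finite-subsets poset of T into FinSet^op along the identity of FinSet^op, a morphism f : (n₁, S₁, τ₁) ⟶ (n₂, S₂, τ₂) is a monomorphism if and only if the underlying function of finite sets [n₂] ⟶ [n₁] is surjective, and is a regular epimorphism if and only if the underlying function [n₂] ⟶ [n₁] is injective and S₁ = S₂. -/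
/-!
Maps into `Γ` correspond to functions out of `[n]`, so they can be tested against the context
`double Γ` on `[n] ⊔ [n]`. A map `π : Γ ⟶ Y` equalizes the left inclusion and the inclusion that
leaves `p` for the right copy exactly when the image of `π.toFun` lies in `p`. Taking for `p` the
complement of a point missed by `u := f.toFun` yields two maps that `f` cannot tell apart, so a
mono has surjective `u`. Taking for `p` the range of `u`, a cofork is a map whose image lies in
that range; if `u` is injective and `S₁ = S₂` it factors uniquely through `f`, which is thus
the coequalizer. Conversely, `f` with its codomain's support enlarged to `S₁` still coequalizes,
so the factorization through a coequalizer `f` forces `S₁ ⊆ S₂`.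
-/

open CategoryTheory CategoryTheory.Limits

universe u

/-- An object of the free regular category on a set `T`: a context `(n, S, τ)` with
`n : ℕ`, `S` a finite subset of `T`, and a typing `τ : Fin n → S`. -/
structure Ctx (T : Type u) where
  n : ℕ
  S : Finset T
  τ : Fin n → T
  τ_mem : ∀ i, τ i ∈ S

/-- A morphism of contexts `(n₁, S₁, τ₁) ⟶ (n₂, S₂, τ₂)`: a function
`Fin n₂ → Fin n₁` compatible with the typings, together with `S₂ ⊆ S₁`
(composition is opposite to that of `FinSet`). -/
@[ext]
structure CtxHom {T : Type u} (Γ₁ Γ₂ : Ctx T) where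
  toFun : Fin Γ₂.n → Fin Γ₁.n
  comm : ∀ i, Γ₁.τ (toFun i) = Γ₂.τ i
  sub : Γ₂.S ⊆ Γ₁.S

instance (T : Type u) : Category (Ctx T) where
  Hom := CtxHom
  id Γ := { toFun := id, comm := fun _ => rfl, sub := Finset.Subset.refl _ }
  comp f g :=
    { toFun := f.toFun ∘ g.toFun
      comm := fun i => (f.comm (g.toFun i)).trans (g.comm i)
      sub := fun a ha => f.sub (g.sub ha) }

namespace Ctx

variable {T : Type u}

@[ext]
lemma hom_ext {Γ Δ : Ctx T} {g h : Γ ⟶ Δ} (e : CtxHom.toFun g = CtxHom.toFun h) : g = h :=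
  CtxHom.ext e

@[simp]
lemma comp_toFun_apply {A B C : Ctx T} (g : A ⟶ B) (h : B ⟶ C) (i : Fin C.n) :
    CtxHom.toFun (g ≫ h) i = CtxHom.toFun g (CtxHom.toFun h i) := rfl

abbrev double (Γ : Ctx T) : Ctx T where
  n := Γ.n + Γ.n
  S := Γ.S
  τ := Fin.append Γ.τ Γ.τ
  τ_mem := Fin.addCases (fun i => by rw [Fin.append_left]; exact Γ.τ_mem i)
    (fun i => by rw [Fin.append_right]; exact Γ.τ_mem i)

def inl (Γ : Ctx T) : double Γ ⟶ Γ where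
  toFun := Fin.castAdd Γ.n
  comm _ := Fin.append_left _ _ _
  sub := Finset.Subset.refl _

def inlOrInr (Γ : Ctx T) (p : Fin Γ.n → Prop) [DecidablePred p] : double Γ ⟶ Γ where
  toFun i := if p i then Fin.castAdd Γ.n i else Fin.natAdd Γ.n i
  comm i := by
    change Fin.append Γ.τ Γ.τ _ = _
    split
    exacts [Fin.append_left _ _ _, Fin.append_right _ _ _]
  sub := Finset.Subset.refl _

lemma inl_comp_eq_inlOrInr_comp_iff {Γ Y : Ctx T} (p : Fin Γ.n → Prop) [DecidablePred p]
    (π : Γ ⟶ Y) : inl Γ ≫ π = inlOrInr Γ p ≫ π ↔ ∀ i, p (CtxHom.toFun π i) := by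
  constructor
  · intro h i
    by_contra hp
    have hi := congrFun (congrArg CtxHom.toFun h) i
    simp [inl, inlOrInr, hp, Fin.ext_iff] at hi
    exact (CtxHom.toFun π i).pos.ne' hi
  · intro h
    ext1
    funext i
    simp only [comp_toFun_apply, inl, inlOrInr]
    rw [if_pos (h i)]

lemma mono_iff_surjective {Γ₁ Γ₂ : Ctx T} (f : Γ₁ ⟶ Γ₂) :
    Mono f ↔ Function.Surjective (CtxHom.toFun f) := by
  constructor
  · intro hf j
    by_contra! hj
    have h : inl Γ₁ = inlOrInr Γ₁ (· ≠ j) :=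
      hf.right_cancellation _ _ ((inl_comp_eq_inlOrInr_comp_iff _ f).2 hj)
    exact (inl_comp_eq_inlOrInr_comp_iff (· ≠ j) (𝟙 Γ₁)).1 (by simpa using h) j rfl
  · intro hf
    exact ⟨fun g h e => hom_ext (hf.injective_comp_right (congrArg CtxHom.toFun e))⟩

lemma epi_iff_injective {Γ₁ Γ₂ : Ctx T} (f : Γ₁ ⟶ Γ₂) :
    Epi f ↔ Function.Injective (CtxHom.toFun f) := by
  constructor
  · intro hf a b hab
    have hτ : Γ₂.τ a = Γ₂.τ b := (f.comm a).symm.trans ((congrArg Γ₁.τ hab).trans (f.comm b))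
    let Y : Ctx T := ⟨1, Γ₂.S, fun _ => Γ₂.τ a, fun _ => Γ₂.τ_mem a⟩
    let g : Γ₂ ⟶ Y := ⟨fun _ => a, fun _ => rfl, Finset.Subset.refl _⟩
    let h : Γ₂ ⟶ Y := ⟨fun _ => b, fun _ => hτ.symm, Finset.Subset.refl _⟩
    have hgh : g = h := hf.left_cancellation g h (hom_ext (funext fun _ => hab))
    exact congrFun (congrArg CtxHom.toFun hgh) 0
  · intro hf
    exact ⟨fun g h e => hom_ext (hf.comp_left (congrArg CtxHom.toFun e))⟩

def enlarge (Γ : Ctx T) (S : Finset T) (h : Γ.S ⊆ S) : Ctx T :=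
  ⟨Γ.n, S, Γ.τ, fun i => h (Γ.τ_mem i)⟩

lemma S_eq_of_regularEpi {Γ₁ Γ₂ : Ctx T} {f : Γ₁ ⟶ Γ₂} (hf : RegularEpi f) : Γ₁.S = Γ₂.S := by
  let f' : Γ₁ ⟶ Γ₂.enlarge Γ₁.S f.sub :=
    ⟨(CtxHom.toFun f : Fin Γ₂.n → Fin Γ₁.n), f.comm, Finset.Subset.refl _⟩
  have hw : hf.left ≫ f' = hf.right ≫ f' := hom_ext (congrArg CtxHom.toFun hf.w :)
  let k := Cofork.IsColimit.desc hf.isColimit f' hw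
  exact k.sub.antisymm f.sub

noncomputable def liftOfRange {Γ₁ Γ₂ Y : Ctx T} (f : Γ₁ ⟶ Γ₂) (π : Γ₁ ⟶ Y)
    (hπ : ∀ i, CtxHom.toFun π i ∈ Set.range (CtxHom.toFun f)) (hS : Y.S ⊆ Γ₂.S) : Γ₂ ⟶ Y where
  toFun i := (hπ i).choose
  comm i := by rw [← f.comm, (hπ i).choose_spec, π.comm]
  sub := hS

lemma comp_liftOfRange {Γ₁ Γ₂ Y : Ctx T} (f : Γ₁ ⟶ Γ₂) (π : Γ₁ ⟶ Y)
    (hπ : ∀ i, CtxHom.toFun π i ∈ Set.range (CtxHom.toFun f)) (hS : Y.S ⊆ Γ₂.S) :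
    f ≫ liftOfRange f π hπ hS = π :=
  hom_ext (funext fun i => (hπ i).choose_spec)

noncomputable def regularEpiOfInjective {Γ₁ Γ₂ : Ctx T} (f : Γ₁ ⟶ Γ₂)
    (hf : Function.Injective (CtxHom.toFun f)) (hS : Γ₁.S = Γ₂.S) : RegularEpi f := by
  classical
  have hrange {Y : Ctx T} (π : Γ₁ ⟶ Y) :=
    inl_comp_eq_inlOrInr_comp_iff (· ∈ Set.range (CtxHom.toFun f)) π
  haveI : Epi f := (epi_iff_injective f).2 hf
  exact
    { W := double Γ₁
      left := inl Γ₁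
      right := inlOrInr Γ₁ (· ∈ Set.range (CtxHom.toFun f))
      w := (hrange f).2 fun i => ⟨i, rfl⟩
      isColimit := Cofork.IsColimit.mk _
        (fun s => liftOfRange f s.π ((hrange s.π).1 s.condition) (hS ▸ s.π.sub))
        (fun s => comp_liftOfRange ..)
        (fun s m hm => (cancel_epi f).1 (hm.trans (comp_liftOfRange ..).symm)) }

lemma nonempty_regularEpi_iff {Γ₁ Γ₂ : Ctx T} (f : Γ₁ ⟶ Γ₂) :
    Nonempty (RegularEpi f) ↔ Function.Injective (CtxHom.toFun f) ∧ Γ₁.S = Γ₂.S :=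
  ⟨fun ⟨hf⟩ => ⟨(epi_iff_injective f).1 (hf.epi f), S_eq_of_regularEpi hf⟩,
    fun ⟨hinj, hS⟩ => ⟨regularEpiOfInjective f hinj hS⟩⟩

end Ctx

/-- In the free regular category on a set `T` (described concretely via contexts), a
morphism `f : (n₁, S₁, τ₁) ⟶ (n₂, S₂, τ₂)` is a monomorphism iff its underlying function
`Fin n₂ → Fin n₁` is surjective, and a regular epimorphism iff the underlying function is
injective and `S₁ = S₂`. -/
theorem statement17 {T : Type u} {Γ₁ Γ₂ : Ctx T} (f : Γ₁ ⟶ Γ₂) :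
    (Mono f ↔ Function.Surjective (CtxHom.toFun f)) ∧
    (Nonempty (RegularEpi f) ↔ (Function.Injective (CtxHom.toFun f) ∧ Γ₁.S = Γ₂.S)) :=
  ⟨Ctx.mono_iff_surjective f, Ctx.nonempty_regularEpi_iff f⟩
end
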